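/- Let P be the projector of a permutation-invariant n-qubit quantum code and define the permutation-invariant weight enumerator |π⟩ = Σ_{0≤x+y+z≤n} tr(σ_{x,y,z,n}P)² |σ_{x,y,z,n}⟩. Define the compressed connection matrices M̂_A = Σ_{i=0}^{n} Σ_{x+y+z=i} (n choose x,y,z) |i⟩⟨σ_{x,y,z,n}| and M̂_B = Σ_{i=0}^{n} Σ_{0≤x+y+z≤n} F(i,x,y,z,n) |i⟩⟨σ_{x,y,z,n}|, where F(i,x,y,z,n) = 2^{−n} Σ_{E∈G_n, wt(E)=i} Σ_{σ∈C_{x,y,z,n}} β(E,σ) and β(E,σ) = +1 if E and σ commute and −1 if they anticommute. Then M̂_A|π⟩ = (tr P)² |A^{SL}⟩ and M̂_B|π⟩ = (tr P) |B^{SL}⟩. -/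

import Mathlib

open Matrix BigOperators

/-- The single-qubit Pauli matrices `I, X, Y, Z`, indexed by `Fin 4`. -/
noncomputable def pauli1 (k : Fin 4) : Matrix (Fin 2) (Fin 2) ℂ :=
  if k = 0 then 1
  else if k = 1 then !![0, 1; 1, 0]
  else if k = 2 then !![0, -Complex.I; Complex.I, 0]
  else !![1, 0; 0, -1]

/-- The `n`-qubit Pauli operator labelled by `p : Fin n → Fin 4`, i.e. the tensor product
`pauli1 (p 0) ⊗ ⋯ ⊗ pauli1 (p (n-1))`, acting on `(ℂ²)^{⊗n} ≅ ℂ^{2^n}` (whose standard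
basis is indexed by `Fin n → Fin 2`).  The map `p ↦ PauliOp n p` enumerates `G_n`. -/
noncomputable def PauliOp (n : ℕ) (p : Fin n → Fin 4) :
    Matrix (Fin n → Fin 2) (Fin n → Fin 2) ℂ :=
  fun v w => ∏ i, pauli1 (p i) (v i) (w i)

/-- The weight of a Pauli label: the number of non-identity tensor factors. -/
def pwt {n : ℕ} (p : Fin n → Fin 4) : ℕ :=
  (Finset.univ.filter fun i => p i ≠ 0).card

/-- The unitary qubit-permutation operator associated with `π ∈ S_n`, acting on
`(ℂ²)^{⊗n}` by permuting the tensor factors. -/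
noncomputable def permMat (n : ℕ) (π : Equiv.Perm (Fin n)) :
    Matrix (Fin n → Fin 2) (Fin n → Fin 2) ℂ :=
  fun v w => if w = v ∘ π then 1 else 0

/-- The Pauli label of `σ_{x,y,z,n} = X^{⊗x} ⊗ Y^{⊗y} ⊗ Z^{⊗z} ⊗ I^{⊗(n-x-y-z)}`. -/
def sigmaLabel (n x y z : ℕ) : Fin n → Fin 4 :=
  fun i => if (i : ℕ) < x then 1
    else if (i : ℕ) < x + y then 2
    else if (i : ℕ) < x + y + z then 3
    else 0

/-- The index set of representatives: triples `(x,y,z)` with `x + y + z ≤ n`. -/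
abbrev PRep (n : ℕ) :=
  {t : Fin (n + 1) × Fin (n + 1) × Fin (n + 1) //
    (t.1 : ℕ) + (t.2.1 : ℕ) + (t.2.2 : ℕ) ≤ n}

/-- The Pauli operator `σ_{x,y,z,n}` attached to a representative. -/
noncomputable def sigmaRep (n : ℕ) (r : PRep n) :
    Matrix (Fin n → Fin 2) (Fin n → Fin 2) ℂ :=
  PauliOp n (sigmaLabel n (r.1.1 : ℕ) (r.1.2.1 : ℕ) (r.1.2.2 : ℕ))

/-- `PauliOp n τ` belongs to the orbit `C_{x,y,z,n} = {π σ_{x,y,z,n} π† : π ∈ S_n}`. -/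
def inOrbit (n : ℕ) (τ : Fin n → Fin 4) (r : PRep n) : Prop :=
  ∃ π : Equiv.Perm (Fin n),
    PauliOp n τ = permMat n π * sigmaRep n r * (permMat n π)ᴴ

open Classical in
/-- The matrix `W_n = Σ_{x+y+z≤n} Σ_{τ ∈ C_{x,y,z,n}} |τ⟩⟨σ_{x,y,z,n}|` mapping each
representative to the (indicator of its) orbit. -/
noncomputable def Wn (n : ℕ) : Matrix (Fin n → Fin 4) (PRep n) ℂ :=
  fun τ r => if inOrbit n τ r then 1 else 0

/-- The compressed auxiliary vector `|φ_picode⟩ = Σ_{x+y+z≤n} tr(σ_{x,y,z,n}P) |σ_{x,y,z,n}⟩`. -/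
noncomputable def phiPicode (n : ℕ) (P : Matrix (Fin n → Fin 2) (Fin n → Fin 2) ℂ) :
    PRep n → ℂ :=
  fun r => Matrix.trace (sigmaRep n r * P)

/-- The Shor–Laflamme A-type enumerator `A_i^SL = (1/tr(P)²) Σ_{wt E = i} tr(EP)tr(E†P)`. -/
noncomputable def ASL (n : ℕ) (P : Matrix (Fin n → Fin 2) (Fin n → Fin 2) ℂ)
    (i : ℕ) : ℂ :=
  (1 / (Matrix.trace P) ^ 2) *
    ∑ p ∈ Finset.univ.filter (fun p : Fin n → Fin 4 => pwt p = i),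
      Matrix.trace (PauliOp n p * P) * Matrix.trace ((PauliOp n p)ᴴ * P)

/-- The Shor–Laflamme B-type enumerator `B_i^SL = (1/tr(P)) Σ_{wt E = i} tr(EPE†P)`. -/
noncomputable def BSL (n : ℕ) (P : Matrix (Fin n → Fin 2) (Fin n → Fin 2) ℂ)
    (i : ℕ) : ℂ :=
  (1 / Matrix.trace P) *
    ∑ p ∈ Finset.univ.filter (fun p : Fin n → Fin 4 => pwt p = i),
      Matrix.trace (PauliOp n p * P * (PauliOp n p)ᴴ * P)

open Classical in
/-- `F(i,x,y,z,n) = 2^{-n} Σ_{E ∈ G_n, wt E = i} Σ_{σ ∈ C_{x,y,z,n}} β(E,σ)` where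
`β(E,σ) = +1` if `E` and `σ` commute and `-1` if they anticommute. -/
noncomputable def Fcoef (n : ℕ) (i : ℕ) (r : PRep n) : ℂ :=
  ((2 : ℂ) ^ n)⁻¹ *
    ∑ p ∈ Finset.univ.filter (fun p : Fin n → Fin 4 => pwt p = i),
      ∑ τ : Fin n → Fin 4,
        if inOrbit n τ r then
          (if PauliOp n p * PauliOp n τ = PauliOp n τ * PauliOp n p then (1 : ℂ) else -1)
        else 0

/-- The compressed connection matrix
`M̂_A = Σ_i Σ_{x+y+z=i} (n choose x,y,z) |i⟩⟨σ_{x,y,z,n}|`. -/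
noncomputable def MAhat (n : ℕ) : Matrix (Fin (n + 1)) (PRep n) ℂ :=
  fun i r =>
    if (r.1.1 : ℕ) + (r.1.2.1 : ℕ) + (r.1.2.2 : ℕ) = (i : ℕ) then
      (Nat.factorial n : ℂ) /
        ((Nat.factorial (r.1.1 : ℕ)) * (Nat.factorial (r.1.2.1 : ℕ)) *
          (Nat.factorial (r.1.2.2 : ℕ)) *
          (Nat.factorial (n - (r.1.1 : ℕ) - (r.1.2.1 : ℕ) - (r.1.2.2 : ℕ))))
    else 0

/-- The compressed connection matrix
`M̂_B = Σ_i Σ_{x+y+z≤n} F(i,x,y,z,n) |i⟩⟨σ_{x,y,z,n}|`. -/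
noncomputable def MBhat (n : ℕ) : Matrix (Fin (n + 1)) (PRep n) ℂ :=
  fun i r => Fcoef n (i : ℕ) r

/-- The permutation-invariant weight enumerator
`|π⟩ = Σ_{x+y+z≤n} tr(σ_{x,y,z,n}P)² |σ_{x,y,z,n}⟩`. -/
noncomputable def piVec (n : ℕ) (P : Matrix (Fin n → Fin 2) (Fin n → Fin 2) ℂ) :
    PRep n → ℂ :=
  fun r => (Matrix.trace (sigmaRep n r * P)) ^ 2


namespace Stmt15
def psign (a b : Fin 4) : ℂ := if a = 0 ∨ b = 0 ∨ a = b then 1 else -1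

lemma pauli1_herm (k : Fin 4) : (pauli1 k)ᴴ = pauli1 k := by
  ext i j
  fin_cases k <;> fin_cases i <;> fin_cases j <;>
    simp [pauli1, Matrix.conjTranspose_apply, Matrix.one_apply]

lemma pauli1_sq (k : Fin 4) : pauli1 k * pauli1 k = 1 := by
  ext i j
  fin_cases k <;> fin_cases i <;> fin_cases j <;>
    simp [pauli1, Matrix.mul_apply, Fin.sum_univ_two, Matrix.one_apply] <;>
    simp [Complex.ext_iff]

lemma pauli1_trace (a b : Fin 4) :
    Matrix.trace (pauli1 a * pauli1 b) = if a = b then 2 else 0 := by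
  fin_cases a <;> fin_cases b <;>
    simp [pauli1, Matrix.trace, Matrix.diag, Matrix.mul_apply, Fin.sum_univ_two,
      Matrix.one_apply] <;> norm_num

lemma pauli1_psign (a b : Fin 4) :
    pauli1 a * pauli1 b = psign a b • (pauli1 b * pauli1 a) := by
  ext i j
  fin_cases a <;> fin_cases b <;> fin_cases i <;> fin_cases j <;>
    simp [pauli1, psign, Matrix.mul_apply, Fin.sum_univ_two, Matrix.one_apply] <;>
    simp [Complex.ext_iff] <;> ring_nf

lemma psign_sq (a b : Fin 4) : psign a b * psign a b = 1 := by
  unfold psign; split_ifs <;> norm_num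

lemma pauli1_complete (a b c d : Fin 2) :
    (∑ k : Fin 4, pauli1 k a b * pauli1 k c d) = if a = d ∧ b = c then 2 else 0 := by
  fin_cases a <;> fin_cases b <;> fin_cases c <;> fin_cases d <;>
    simp [Fin.sum_univ_four, pauli1, Matrix.one_apply] <;> simp [Complex.ext_iff] <;> ring_nf

open Finset in
lemma prod_ite_zero {α : Type*} [Fintype α] (P : α → Prop) [DecidablePred P] (c : ℂ) :
    (∏ i, (if P i then c else 0)) = if ∀ i, P i then c ^ (Fintype.card α) else 0 := by
  by_cases h : ∀ i, P i
  · simp [h, Finset.prod_const]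
  · rw [if_neg h]
    push_neg at h
    obtain ⟨i, hi⟩ := h
    exact Finset.prod_eq_zero (Finset.mem_univ i) (by simp [hi])

variable {n : ℕ}

lemma PauliOp_mul_apply (p q : Fin n → Fin 4) (v w : Fin n → Fin 2) :
    (PauliOp n p * PauliOp n q) v w = ∏ i, (pauli1 (p i) * pauli1 (q i)) (v i) (w i) := by
  have h0 : ∀ u : Fin n → Fin 2,
      (∏ i, pauli1 (p i) (v i) (u i)) * ∏ i, pauli1 (q i) (u i) (w i)
      = ∏ i, (pauli1 (p i) (v i) (u i) * pauli1 (q i) (u i) (w i)) :=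
    fun u => (Finset.prod_mul_distrib).symm
  rw [Matrix.mul_apply]
  simp only [PauliOp]
  rw [Finset.sum_congr rfl fun u _ => h0 u,
    (Fintype.prod_sum (fun i (j : Fin 2) => pauli1 (p i) (v i) j * pauli1 (q i) j (w i))).symm]
  exact Finset.prod_congr rfl fun i _ => (Matrix.mul_apply).symm

lemma PauliOp_trace_mul (p q : Fin n → Fin 4) :
    Matrix.trace (PauliOp n p * PauliOp n q) = if p = q then (2:ℂ)^n else 0 := by
  have h1 : Matrix.trace (PauliOp n p * PauliOp n q)
      = ∏ i, Matrix.trace (pauli1 (p i) * pauli1 (q i)) := by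
    simp only [Matrix.trace, Matrix.diag]
    simp_rw [PauliOp_mul_apply]
    rw [← Fintype.prod_sum (fun i (j : Fin 2) => (pauli1 (p i) * pauli1 (q i)) j j)]
  rw [h1]
  simp_rw [pauli1_trace]
  rw [prod_ite_zero (fun i => p i = q i)]
  simp [funext_iff]

lemma PauliOp_sq (p : Fin n → Fin 4) : PauliOp n p * PauliOp n p = 1 := by
  ext v w
  rw [PauliOp_mul_apply]
  simp_rw [pauli1_sq]
  simp only [Matrix.one_apply]
  rw [prod_ite_zero (fun i => v i = w i)]
  simp [funext_iff]

lemma PauliOp_herm (p : Fin n → Fin 4) : (PauliOp n p)ᴴ = PauliOp n p := by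
  ext v w
  simp only [Matrix.conjTranspose_apply, PauliOp, star_prod]
  refine Finset.prod_congr rfl fun i _ => ?_
  have h := congrFun (congrFun (pauli1_herm (p i)) (v i)) (w i)
  simpa [Matrix.conjTranspose_apply] using h

lemma PauliOp_inj {p q : Fin n → Fin 4} (h : PauliOp n p = PauliOp n q) : p = q := by
  by_contra hne
  have h2 := PauliOp_trace_mul p q
  rw [if_neg hne, h, PauliOp_trace_mul, if_pos rfl] at h2
  exact pow_ne_zero n two_ne_zero h2

noncomputable def tsign (p q : Fin n → Fin 4) : ℂ := ∏ i, psign (p i) (q i)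

lemma PauliOp_psign (p q : Fin n → Fin 4) :
    PauliOp n p * PauliOp n q = tsign p q • (PauliOp n q * PauliOp n p) := by
  ext v w
  rw [Matrix.smul_apply, PauliOp_mul_apply, PauliOp_mul_apply, tsign, smul_eq_mul,
    ← Finset.prod_mul_distrib]
  refine Finset.prod_congr rfl fun i _ => ?_
  have h := congrFun (congrFun (pauli1_psign (p i) (q i)) (v i)) (w i)
  simpa [Matrix.smul_apply, smul_eq_mul] using h

lemma tsign_sq (p q : Fin n → Fin 4) : tsign p q * tsign p q = 1 := by
  rw [tsign, ← Finset.prod_mul_distrib]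
  simp_rw [psign_sq]
  simp

lemma matrix_one_ne_zero : (1 : Matrix (Fin n → Fin 2) (Fin n → Fin 2) ℂ) ≠ 0 := by
  intro h
  have h2 := congrFun (congrFun h (fun _ => 0)) (fun _ => 0)
  simp [Matrix.one_apply] at h2

lemma PauliOp_commute_iff (p q : Fin n → Fin 4) :
    (PauliOp n p * PauliOp n q = PauliOp n q * PauliOp n p) ↔ tsign p q = 1 := by
  constructor
  · intro h
    rcases mul_self_eq_one_iff.mp (tsign_sq p q) with h1 | h1
    · exact h1
    · exfalso
      have hs := PauliOp_psign p q
      rw [h1, neg_one_smul, ← h] at hs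
      have h0 : PauliOp n p * PauliOp n q = 0 := by
        ext v w
        have h2 := congrFun (congrFun hs v) w
        rw [Matrix.neg_apply] at h2
        have h3 : (2:ℂ) * (PauliOp n p * PauliOp n q) v w = 0 := by linear_combination h2
        simpa using (mul_eq_zero.mp h3).resolve_left (by norm_num)
      have hone : (PauliOp n p * (PauliOp n p * PauliOp n q)) * PauliOp n q = 1 := by
        rw [← mul_assoc, PauliOp_sq, one_mul, PauliOp_sq]
      rw [h0, mul_zero, zero_mul] at hone
      exact matrix_one_ne_zero hone.symm
  · intro h
    rw [PauliOp_psign p q, h, one_smul]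

open Classical in
lemma PauliOp_conj (p q : Fin n → Fin 4) :
    PauliOp n p * PauliOp n q * PauliOp n p =
      (if PauliOp n p * PauliOp n q = PauliOp n q * PauliOp n p then (1:ℂ) else -1) •
        PauliOp n q := by
  by_cases h : PauliOp n p * PauliOp n q = PauliOp n q * PauliOp n p
  · rw [if_pos h, one_smul, h, mul_assoc, PauliOp_sq, mul_one]
  · rw [if_neg h]
    have hs : tsign p q = -1 := by
      rcases mul_self_eq_one_iff.mp (tsign_sq p q) with h1 | h1
      · exact absurd ((PauliOp_commute_iff p q).mpr h1) h
      · exact h1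
    rw [PauliOp_psign p q, hs, neg_one_smul, neg_one_smul, Matrix.neg_mul, mul_assoc,
      PauliOp_sq, mul_one]

lemma PauliOp_complete (a b v w : Fin n → Fin 2) :
    (∑ τ : Fin n → Fin 4, PauliOp n τ a b * PauliOp n τ v w)
      = if a = w ∧ b = v then (2:ℂ)^n else 0 := by
  simp only [PauliOp]
  have h1 : ∀ τ : Fin n → Fin 4,
      (∏ i, pauli1 (τ i) (a i) (b i)) * ∏ i, pauli1 (τ i) (v i) (w i)
      = ∏ i, (pauli1 (τ i) (a i) (b i) * pauli1 (τ i) (v i) (w i)) :=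
    fun τ => (Finset.prod_mul_distrib).symm
  simp_rw [h1]
  rw [← Fintype.prod_sum (fun i (k : Fin 4) => pauli1 k (a i) (b i) * pauli1 k (v i) (w i))]
  simp_rw [pauli1_complete]
  rw [prod_ite_zero (fun i => a i = w i ∧ b i = v i)]
  simp [funext_iff, forall_and]

lemma PauliOp_expand (M : Matrix (Fin n → Fin 2) (Fin n → Fin 2) ℂ) :
    M = ((2:ℂ)^n)⁻¹ • ∑ τ : Fin n → Fin 4, Matrix.trace (PauliOp n τ * M) • PauliOp n τ := by
  ext v w
  simp only [Matrix.smul_apply, Matrix.sum_apply, smul_eq_mul]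
  have htr : ∀ τ, Matrix.trace (PauliOp n τ * M) = ∑ a, ∑ b, PauliOp n τ a b * M b a := by
    intro τ; simp [Matrix.trace, Matrix.diag, Matrix.mul_apply]
  have key : ∑ τ : Fin n → Fin 4, Matrix.trace (PauliOp n τ * M) * PauliOp n τ v w
      = (2:ℂ)^n * M v w := by
    simp_rw [htr, Finset.sum_mul]
    rw [Finset.sum_comm]
    have h2 : ∀ a, ∑ τ : Fin n → Fin 4, ∑ b, PauliOp n τ a b * M b a * PauliOp n τ v w
        = ∑ b, (if a = w ∧ b = v then (2:ℂ)^n else 0) * M b a := by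
      intro a
      rw [Finset.sum_comm]
      refine Finset.sum_congr rfl fun b _ => ?_
      rw [← PauliOp_complete a b v w, Finset.sum_mul]
      exact Finset.sum_congr rfl fun τ _ => by ring
    simp_rw [h2]
    rw [Finset.sum_eq_single w (fun a _ ha => Finset.sum_eq_zero fun b _ => by
      rw [if_neg (fun hc => ha hc.1), zero_mul]) (fun h => absurd (Finset.mem_univ w) h)]
    rw [Finset.sum_eq_single v (fun b _ hb => by rw [if_neg (fun hc => hb hc.2), zero_mul])
      (fun h => absurd (Finset.mem_univ v) h)]
    rw [if_pos ⟨rfl, rfl⟩]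
  rw [key]
  rw [inv_mul_cancel_left₀ (pow_ne_zero n two_ne_zero)]

lemma permMat_conjTranspose (π : Equiv.Perm (Fin n)) :
    (permMat n π)ᴴ = permMat n π⁻¹ := by
  ext v w
  simp only [Matrix.conjTranspose_apply, permMat]
  have hiff : (v = w ∘ π) ↔ (w = v ∘ ⇑π⁻¹) := by
    constructor
    · rintro rfl; funext i; simp
    · rintro rfl; funext i; simp
  rw [apply_ite (star : ℂ → ℂ), star_one, star_zero, if_congr hiff rfl rfl]

lemma permMat_mul_apply (π : Equiv.Perm (Fin n)) (M : Matrix (Fin n → Fin 2) (Fin n → Fin 2) ℂ)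
    (v w : Fin n → Fin 2) : (permMat n π * M) v w = M (v ∘ π) w := by
  rw [Matrix.mul_apply]
  rw [Finset.sum_eq_single (v ∘ π) (fun u _ hu => by simp [permMat, hu])
    (fun h => absurd (Finset.mem_univ _) h)]
  simp [permMat]

lemma mul_permMat_apply (π : Equiv.Perm (Fin n)) (M : Matrix (Fin n → Fin 2) (Fin n → Fin 2) ℂ)
    (v w : Fin n → Fin 2) : (M * permMat n π) v w = M v (w ∘ ⇑π⁻¹) := by
  rw [Matrix.mul_apply]
  rw [Finset.sum_eq_single (w ∘ ⇑π⁻¹) (fun u _ hu => ?_)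
    (fun h => absurd (Finset.mem_univ _) h)]
  · have : w = (w ∘ ⇑π⁻¹) ∘ π := by funext i; simp
    rw [show permMat n π (w ∘ ⇑π⁻¹) w = 1 from if_pos this, mul_one]
  · have : ¬ (w = u ∘ π) := by
      intro hc
      apply hu
      funext i; simp [hc]
    simp [permMat, this]

lemma permMat_conj_PauliOp (π : Equiv.Perm (Fin n)) (τ : Fin n → Fin 4) :
    permMat n π * PauliOp n τ * (permMat n π)ᴴ = PauliOp n (τ ∘ ⇑π⁻¹) := by
  ext v w
  rw [permMat_conjTranspose, mul_permMat_apply, permMat_mul_apply]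
  simp only [PauliOp, inv_inv]
  rw [← Equiv.prod_comp π (fun i => pauli1 ((τ ∘ ⇑π⁻¹) i) (v i) (w i))]
  refine Finset.prod_congr rfl fun i _ => ?_
  simp

lemma inOrbit_iff (p : Fin n → Fin 4) (r : PRep n) :
    inOrbit n p r ↔ ∃ π : Equiv.Perm (Fin n),
      p = sigmaLabel n (r.1.1 : ℕ) (r.1.2.1 : ℕ) (r.1.2.2 : ℕ) ∘ π := by
  unfold inOrbit sigmaRep
  constructor
  · rintro ⟨π, hπ⟩
    rw [permMat_conj_PauliOp] at hπ
    exact ⟨π⁻¹, PauliOp_inj hπ⟩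
  · rintro ⟨π, hπ⟩
    refine ⟨π⁻¹, ?_⟩
    rw [permMat_conj_PauliOp, inv_inv, hπ]

open Finset

def cnt (p : Fin n → Fin 4) (k : Fin 4) : ℕ := (univ.filter fun i => p i = k).card

lemma cnt_card_subtype (p : Fin n → Fin 4) (k : Fin 4) :
    Fintype.card {i // p i = k} = cnt p k := Fintype.card_subtype _

lemma cnt_comp (p : Fin n → Fin 4) (π : Equiv.Perm (Fin n)) (k : Fin 4) :
    cnt (p ∘ π) k = cnt p k := by
  unfold cnt
  apply Finset.card_bij (fun i _ => π i)
  · intro a ha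
    simp only [mem_filter, mem_univ, true_and, Function.comp_apply] at ha ⊢
    exact ha
  · intro a _ b _ h
    exact π.injective h
  · intro b hb
    simp only [mem_filter, mem_univ, true_and, Function.comp_apply] at hb ⊢
    exact ⟨π.symm b, by simpa using hb, by simp⟩

lemma exists_perm_comp {p q : Fin n → Fin 4} (h : ∀ k, cnt p k = cnt q k) :
    ∃ π : Equiv.Perm (Fin n), p = q ∘ π := by
  have e : ∀ k, {i // p i = k} ≃ {i // q i = k} := fun k =>
    Fintype.equivOfCardEq (by rw [cnt_card_subtype, cnt_card_subtype]; exact h k)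
  exact ⟨Equiv.ofFiberEquiv e, funext fun i => (Equiv.ofFiberEquiv_map e i).symm⟩

lemma card_filter_lt {m : ℕ} (h : m ≤ n) :
    (univ.filter fun i : Fin n => (i : ℕ) < m).card = m := by
  have himg : (univ.filter fun i : Fin n => (i : ℕ) < m)
      = (univ : Finset (Fin m)).image (Fin.castLE h) := by
    ext j
    simp only [mem_filter, mem_univ, true_and, mem_image]
    constructor
    · intro hj
      exact ⟨⟨(j : ℕ), hj⟩, by ext; simp⟩
    · rintro ⟨a, -, rfl⟩
      simpa using a.isLt
  rw [himg, Finset.card_image_of_injective _ (Fin.castLE_injective h), card_univ,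
    Fintype.card_fin]

lemma card_filter_Ico {a b : ℕ} (hab : a ≤ b) (h : b ≤ n) :
    (univ.filter fun i : Fin n => a ≤ (i : ℕ) ∧ (i : ℕ) < b).card = b - a := by
  have h1 : (univ.filter fun i : Fin n => (i : ℕ) < b) =
      (univ.filter fun i : Fin n => (i : ℕ) < a) ∪
        (univ.filter fun i : Fin n => a ≤ (i : ℕ) ∧ (i : ℕ) < b) := by
    rw [← Finset.filter_or]
    apply Finset.filter_congr
    intro i _
    constructor
    · intro hi; omega
    · intro hi; omega
  have hd : Disjoint (univ.filter fun i : Fin n => (i : ℕ) < a)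
      (univ.filter fun i : Fin n => a ≤ (i : ℕ) ∧ (i : ℕ) < b) := by
    rw [Finset.disjoint_left]
    intro i hi hi2
    simp only [mem_filter, mem_univ, true_and] at hi hi2
    omega
  have h2 := congrArg Finset.card h1
  rw [Finset.card_union_of_disjoint hd, card_filter_lt h, card_filter_lt (le_trans hab h)] at h2
  omega

lemma sigmaLabel_cnt {x y z : ℕ} (h : x + y + z ≤ n) :
    cnt (sigmaLabel n x y z) 1 = x ∧ cnt (sigmaLabel n x y z) 2 = y ∧
      cnt (sigmaLabel n x y z) 3 = z := by
  refine ⟨?_, ?_, ?_⟩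
  · have heq : (univ.filter fun i : Fin n => sigmaLabel n x y z i = 1)
        = (univ.filter fun i : Fin n => (i : ℕ) < x) := by
      apply Finset.filter_congr
      intro i _
      unfold sigmaLabel
      split_ifs with h1 h2 h3
      · exact iff_of_true rfl h1
      · exact iff_of_false (by decide) h1
      · exact iff_of_false (by decide) h1
      · exact iff_of_false (by decide) h1
    rw [cnt, heq, card_filter_lt (by omega)]
  · have heq : (univ.filter fun i : Fin n => sigmaLabel n x y z i = 2)
        = (univ.filter fun i : Fin n => x ≤ (i : ℕ) ∧ (i : ℕ) < x + y) := by
      apply Finset.filter_congr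
      intro i _
      unfold sigmaLabel
      split_ifs with h1 h2 h3
      · exact iff_of_false (by decide) (by omega)
      · exact iff_of_true rfl (by omega)
      · exact iff_of_false (by decide) (by omega)
      · exact iff_of_false (by decide) (by omega)
    rw [cnt, heq, card_filter_Ico (by omega) (by omega)]
    omega
  · have heq : (univ.filter fun i : Fin n => sigmaLabel n x y z i = 3)
        = (univ.filter fun i : Fin n => x + y ≤ (i : ℕ) ∧ (i : ℕ) < x + y + z) := by
      apply Finset.filter_congr
      intro i _
      unfold sigmaLabel
      split_ifs with h1 h2 h3
      · exact iff_of_false (by decide) (by omega)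
      · exact iff_of_false (by decide) (by omega)
      · exact iff_of_true rfl (by omega)
      · exact iff_of_false (by decide) (by omega)
    rw [cnt, heq, card_filter_Ico (by omega) (by omega)]
    omega

lemma cnt_sum (p : Fin n → Fin 4) : ∑ k : Fin 4, cnt p k = n := by
  have h := Finset.card_eq_sum_card_fiberwise
    (fun (x : Fin n) (_ : x ∈ univ) => Finset.mem_univ (p x))
  simpa [cnt, card_univ] using h.symm

lemma pwt_eq (p : Fin n → Fin 4) : pwt p = cnt p 1 + cnt p 2 + cnt p 3 := by
  have h4 := cnt_sum p
  rw [Fin.sum_univ_four] at h4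
  have h5 : cnt p 0 + pwt p = n := by
    unfold pwt cnt
    rw [Finset.card_filter_add_card_filter_not (fun i => p i = 0), card_univ,
      Fintype.card_fin]
  omega

lemma cnt_le (p : Fin n → Fin 4) (k : Fin 4) : cnt p k ≤ n := by
  refine le_trans (Finset.card_filter_le _ _) ?_
  simp

def repOf (n : ℕ) (p : Fin n → Fin 4) : PRep n :=
  ⟨(⟨cnt p 1, Nat.lt_succ_of_le (cnt_le p 1)⟩, ⟨cnt p 2, Nat.lt_succ_of_le (cnt_le p 2)⟩,
    ⟨cnt p 3, Nat.lt_succ_of_le (cnt_le p 3)⟩), by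
      have h := cnt_sum p
      rw [Fin.sum_univ_four] at h
      show cnt p 1 + cnt p 2 + cnt p 3 ≤ n
      omega⟩

lemma repOf_eq_iff (p : Fin n → Fin 4) (r : PRep n) :
    repOf n p = r ↔ inOrbit n p r := by
  obtain ⟨hx, hy, hz⟩ := sigmaLabel_cnt (n := n) (x := (r.1.1 : ℕ)) (y := (r.1.2.1 : ℕ))
    (z := (r.1.2.2 : ℕ)) r.2
  have hrep : repOf n p = r ↔
      (cnt p 1 = (r.1.1 : ℕ) ∧ cnt p 2 = (r.1.2.1 : ℕ) ∧ cnt p 3 = (r.1.2.2 : ℕ)) := by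
    rw [repOf, Subtype.ext_iff, Prod.ext_iff, Prod.ext_iff, Fin.ext_iff, Fin.ext_iff,
      Fin.ext_iff]
  rw [hrep, inOrbit_iff]
  set s := sigmaLabel n (r.1.1 : ℕ) (r.1.2.1 : ℕ) (r.1.2.2 : ℕ) with hs
  constructor
  · rintro ⟨h1, h2, h3⟩
    apply exists_perm_comp
    intro k
    have h0 : cnt p 0 = cnt s 0 := by
      have hp := cnt_sum p
      have hq := cnt_sum s
      rw [Fin.sum_univ_four] at hp hq
      omega
    fin_cases k
    · exact h0
    · exact h1.trans hx.symm
    · exact h2.trans hy.symm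
    · exact h3.trans hz.symm
  · rintro ⟨π, rfl⟩
    rw [cnt_comp, cnt_comp, cnt_comp, hx, hy, hz]
    exact ⟨rfl, rfl, rfl⟩

lemma card_orbit (r : PRep n) :
    (univ.filter fun p : Fin n → Fin 4 => repOf n p = r).card *
      (Nat.factorial (r.1.1 : ℕ) * Nat.factorial (r.1.2.1 : ℕ) *
        Nat.factorial (r.1.2.2 : ℕ) *
        Nat.factorial (n - (r.1.1 : ℕ) - (r.1.2.1 : ℕ) - (r.1.2.2 : ℕ))) =
      Nat.factorial n := by
  classical
  obtain ⟨hx, hy, hz⟩ := sigmaLabel_cnt (n := n) (x := (r.1.1 : ℕ)) (y := (r.1.2.1 : ℕ))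
    (z := (r.1.2.2 : ℕ)) r.2
  set s := sigmaLabel n (r.1.1 : ℕ) (r.1.2.1 : ℕ) (r.1.2.2 : ℕ) with hs
  have h0 : cnt s 0 = n - (r.1.1 : ℕ) - (r.1.2.1 : ℕ) - (r.1.2.2 : ℕ) := by
    have hq := cnt_sum s
    rw [Fin.sum_univ_four] at hq
    omega
  -- the orbit as an image
  have himg : (univ.filter fun p : Fin n → Fin 4 => repOf n p = r)
      = univ.image (fun π : Equiv.Perm (Fin n) => s ∘ π) := by
    ext p
    simp only [mem_filter, mem_univ, true_and, mem_image, repOf_eq_iff, inOrbit_iff]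
    constructor
    · rintro ⟨π, hπ⟩; exact ⟨π, hπ.symm⟩
    · rintro ⟨π, hπ⟩; exact ⟨π, hπ.symm⟩
  -- stabilizer cardinality
  have hstab : (univ.filter fun π : Equiv.Perm (Fin n) => s ∘ π = s).card
      = ∏ k : Fin 4, Nat.factorial (cnt s k) := by
    rw [← Fintype.card_subtype]
    rw [DomMulAct.stabilizer_card s]
    exact Finset.prod_congr rfl fun k _ => by rw [cnt_card_subtype]
  -- fibers of the image map all have stabilizer cardinality
  have hfact : Nat.factorial n = (univ : Finset (Equiv.Perm (Fin n))).card := by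
    simp [Fintype.card_perm]
  have hsum := Finset.card_eq_sum_card_image (fun π : Equiv.Perm (Fin n) => s ∘ π)
    (univ : Finset (Equiv.Perm (Fin n)))
  have hfiber : ∀ p ∈ univ.image (fun π : Equiv.Perm (Fin n) => s ∘ π),
      (univ.filter fun π : Equiv.Perm (Fin n) => s ∘ π = p).card
        = (univ.filter fun π : Equiv.Perm (Fin n) => s ∘ π = s).card := by
    intro p hp
    rw [mem_image] at hp
    obtain ⟨π₀, -, rfl⟩ := hp
    apply Finset.card_bij (fun π _ => π₀.symm.trans π)
    · intro π hπ
      simp only [mem_filter, mem_univ, true_and] at hπ ⊢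
      funext i
      have := congrFun hπ (π₀.symm i)
      simpa using this
    · intro a _ b _ hab
      ext i
      have h2 := congrFun (congrArg (fun e : Equiv.Perm (Fin n) => ⇑e) hab) (π₀ i)
      exact congrArg Fin.val (by simpa using h2)
    · intro g hg
      simp only [mem_filter, mem_univ, true_and] at hg ⊢
      refine ⟨π₀.trans g, ?_, by ext i; simp⟩
      funext i
      have := congrFun hg (π₀ i)
      simpa using this
  rw [Finset.sum_congr rfl hfiber, Finset.sum_const, smul_eq_mul] at hsum
  rw [himg]
  rw [hstab] at hsum
  rw [Fin.prod_univ_four] at hsum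
  rw [h0, hx, hy, hz] at hsum
  rw [← hfact] at hsum
  rw [hsum]
  ring

lemma pwt_of_repOf {p : Fin n → Fin 4} {r : PRep n} (h : repOf n p = r) :
    pwt p = (r.1.1 : ℕ) + (r.1.2.1 : ℕ) + (r.1.2.2 : ℕ) := by
  subst h
  rw [pwt_eq]
  rfl

lemma trace_PauliOp_orbit {P : Matrix (Fin n → Fin 2) (Fin n → Fin 2) ℂ}
    (hperm : ∀ π : Equiv.Perm (Fin n), permMat n π * P = P ∧ P * permMat n π = P)
    {p : Fin n → Fin 4} {r : PRep n} (h : inOrbit n p r) :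
    Matrix.trace (PauliOp n p * P) = Matrix.trace (sigmaRep n r * P) := by
  obtain ⟨π, hπ⟩ := h
  rw [hπ, permMat_conjTranspose]
  rw [mul_assoc (permMat n π * sigmaRep n r), (hperm π⁻¹).1, mul_assoc,
    Matrix.trace_mul_comm, mul_assoc, (hperm π).2]

lemma traceP_ne {P : Matrix (Fin n → Fin 2) (Fin n → Fin 2) ℂ} (hP : P ≠ 0)
    (hproj : P * P = P) (hherm : Pᴴ = P) : Matrix.trace P ≠ 0 := by
  intro h0
  apply hP
  have htr : Matrix.trace (P * Pᴴ) = 0 := by rw [hherm, hproj, h0]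
  have hexp : Matrix.trace (P * Pᴴ)
      = ∑ v, ∑ w, (Complex.normSq (P v w) : ℂ) := by
    simp only [Matrix.trace, Matrix.diag, Matrix.mul_apply, Matrix.conjTranspose_apply]
    refine Finset.sum_congr rfl fun v _ => Finset.sum_congr rfl fun w _ => ?_
    rw [← Complex.mul_conj]
    rfl
  rw [hexp] at htr
  have hreal : ∑ v, ∑ w, Complex.normSq (P v w) = 0 := by
    have := htr
    push_cast at this ⊢
    exact_mod_cast this
  ext v w
  have hv : ∀ v ∈ (Finset.univ : Finset (Fin n → Fin 2)),
      ∑ w, Complex.normSq (P v w) = 0 := by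
    intro v _
    have h1 := (Finset.sum_eq_zero_iff_of_nonneg (fun v _ =>
      Finset.sum_nonneg fun w _ => Complex.normSq_nonneg _)).mp hreal
    exact h1 v (Finset.mem_univ v)
  have h2 := (Finset.sum_eq_zero_iff_of_nonneg (fun w _ =>
    Complex.normSq_nonneg _)).mp (hv v (Finset.mem_univ v)) w (Finset.mem_univ w)
  simpa using Complex.normSq_eq_zero.mp h2

open Classical in
lemma key_B (p : Fin n → Fin 4) (P : Matrix (Fin n → Fin 2) (Fin n → Fin 2) ℂ) :
    Matrix.trace (PauliOp n p * P * PauliOp n p * P)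
      = ((2:ℂ)^n)⁻¹ * ∑ τ : Fin n → Fin 4,
          (if PauliOp n p * PauliOp n τ = PauliOp n τ * PauliOp n p then (1:ℂ) else -1) *
            Matrix.trace (PauliOp n τ * P) ^ 2 := by
  have hexp : PauliOp n p * P * PauliOp n p
      = ((2:ℂ)^n)⁻¹ • ∑ τ : Fin n → Fin 4, (Matrix.trace (PauliOp n τ * P) *
          (if PauliOp n p * PauliOp n τ = PauliOp n τ * PauliOp n p then (1:ℂ) else -1)) •
            PauliOp n τ := by
    conv_lhs => rw [PauliOp_expand (n := n) P]
    rw [Matrix.mul_smul, Matrix.smul_mul]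
    congr 1
    rw [Matrix.mul_sum, Matrix.sum_mul]
    refine Finset.sum_congr rfl fun τ _ => ?_
    rw [Matrix.mul_smul, Matrix.smul_mul, PauliOp_conj, smul_smul]
  rw [hexp, Matrix.smul_mul, Matrix.trace_smul, smul_eq_mul]
  congr 1
  rw [Matrix.sum_mul, Matrix.trace_sum]
  refine Finset.sum_congr rfl fun τ _ => ?_
  rw [Matrix.smul_mul, Matrix.trace_smul, smul_eq_mul]
  ring

open Classical in
lemma key_B2 {P : Matrix (Fin n → Fin 2) (Fin n → Fin 2) ℂ}
    (hperm : ∀ π : Equiv.Perm (Fin n), permMat n π * P = P ∧ P * permMat n π = P)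
    (p : Fin n → Fin 4) :
    Matrix.trace (PauliOp n p * P * (PauliOp n p)ᴴ * P)
      = ((2:ℂ)^n)⁻¹ * ∑ τ : Fin n → Fin 4,
          (if PauliOp n p * PauliOp n τ = PauliOp n τ * PauliOp n p then (1:ℂ) else -1) *
            piVec n P (repOf n τ) := by
  conv_lhs => rw [PauliOp_herm, key_B]
  exact congrArg (fun S => ((2:ℂ)^n)⁻¹ * S) (Finset.sum_congr rfl fun τ _ =>
    congrArg₂ (· * ·) rfl
      (congrArg (· ^ 2) (trace_PauliOp_orbit hperm ((repOf_eq_iff τ _).mp rfl))))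

end Stmt15


set_option maxHeartbeats 1600000

/-- For the projector `P` of a permutation-invariant `n`-qubit quantum
code, the compressed connection matrices satisfy `M̂_A |π⟩ = (tr P)² |A^SL⟩` and
`M̂_B |π⟩ = (tr P) |B^SL⟩`. -/
theorem stmt15 (n : ℕ) (P : Matrix (Fin n → Fin 2) (Fin n → Fin 2) ℂ)
    (hP : P ≠ 0) (hproj : P * P = P) (hherm : Pᴴ = P)
    (hperm : ∀ π : Equiv.Perm (Fin n), permMat n π * P = P ∧ P * permMat n π = P) :
    ((MAhat n).mulVec (piVec n P) =
        fun i : Fin (n + 1) => (Matrix.trace P) ^ 2 * ASL n P (i : ℕ)) ∧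
      ((MBhat n).mulVec (piVec n P) =
        fun i : Fin (n + 1) => Matrix.trace P * BSL n P (i : ℕ)) := by
  have htr : Matrix.trace P ≠ 0 := Stmt15.traceP_ne hP hproj hherm
  constructor
  · funext i
    simp only [Matrix.mulVec, dotProduct, MAhat]
    have hA : (Matrix.trace P) ^ 2 * ASL n P (i : ℕ)
        = ∑ p ∈ Finset.univ.filter (fun p : Fin n → Fin 4 => pwt p = (i : ℕ)),
            Matrix.trace (PauliOp n p * P) * Matrix.trace ((PauliOp n p)ᴴ * P) := by
      rw [ASL, ← mul_assoc, mul_one_div, div_self (pow_ne_zero 2 htr), one_mul]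
    rw [hA]
    have hterm : ∀ p : Fin n → Fin 4,
        Matrix.trace (PauliOp n p * P) * Matrix.trace ((PauliOp n p)ᴴ * P)
          = piVec n P (Stmt15.repOf n p) := by
      intro p
      rw [Stmt15.PauliOp_herm,
        Stmt15.trace_PauliOp_orbit hperm ((Stmt15.repOf_eq_iff p _).mp rfl), piVec, sq]
    rw [Finset.sum_congr rfl fun p _ => hterm p]
    rw [← Finset.sum_fiberwise_of_maps_to
      (fun (p : Fin n → Fin 4) (_ : p ∈ Finset.univ.filter fun p => pwt p = (i : ℕ)) =>
        Finset.mem_univ (Stmt15.repOf n p))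
      (fun p => piVec n P (Stmt15.repOf n p))]
    refine Finset.sum_congr rfl fun r _ => ?_
    have hin : ∀ p ∈ (Finset.univ.filter fun p : Fin n → Fin 4 => pwt p = (i : ℕ)).filter
        (fun p => Stmt15.repOf n p = r),
        piVec n P (Stmt15.repOf n p) = piVec n P r := by
      intro p hp
      rw [(Finset.mem_filter.mp hp).2]
    rw [Finset.sum_congr rfl hin, Finset.sum_const, nsmul_eq_mul]
    by_cases hcase : (r.1.1 : ℕ) + (r.1.2.1 : ℕ) + (r.1.2.2 : ℕ) = (i : ℕ)
    · have hff : (Finset.univ.filter fun p : Fin n → Fin 4 => pwt p = (i : ℕ)).filter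
          (fun p => Stmt15.repOf n p = r)
          = Finset.univ.filter fun p : Fin n → Fin 4 => Stmt15.repOf n p = r := by
        rw [Finset.filter_filter]
        apply Finset.filter_congr
        intro p _
        constructor
        · rintro ⟨-, h2⟩; exact h2
        · intro h2
          exact ⟨by rw [Stmt15.pwt_of_repOf h2, hcase], h2⟩
      rw [hff, if_pos hcase]
      congr 1
      have hcard := Stmt15.card_orbit (n := n) r
      have hne : ((Nat.factorial (r.1.1 : ℕ) : ℂ) * (Nat.factorial (r.1.2.1 : ℕ) : ℂ) *
          (Nat.factorial (r.1.2.2 : ℕ) : ℂ) *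
          (Nat.factorial (n - (r.1.1 : ℕ) - (r.1.2.1 : ℕ) - (r.1.2.2 : ℕ)) : ℂ)) ≠ 0 := by
        have h1 : ∀ m : ℕ, ((Nat.factorial m : ℕ) : ℂ) ≠ 0 := fun m =>
          Nat.cast_ne_zero.mpr (Nat.factorial_ne_zero m)
        exact mul_ne_zero (mul_ne_zero (mul_ne_zero (h1 _) (h1 _)) (h1 _)) (h1 _)
      rw [div_eq_iff hne]
      exact_mod_cast hcard.symm
    · have hempty : (Finset.univ.filter fun p : Fin n → Fin 4 => pwt p = (i : ℕ)).filter
          (fun p => Stmt15.repOf n p = r) = ∅ := by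
        rw [Finset.eq_empty_iff_forall_notMem]
        intro p hp
        rw [Finset.mem_filter, Finset.mem_filter] at hp
        exact hcase (by rw [← Stmt15.pwt_of_repOf hp.2, hp.1.2])
      rw [hempty, if_neg hcase]
      simp
  · funext i
    simp only [Matrix.mulVec, dotProduct, MBhat, Fcoef]
    have hB : Matrix.trace P * BSL n P (i : ℕ)
        = ∑ p ∈ Finset.univ.filter (fun p : Fin n → Fin 4 => pwt p = (i : ℕ)),
            Matrix.trace (PauliOp n p * P * (PauliOp n p)ᴴ * P) := by
      rw [BSL, ← mul_assoc, mul_one_div, div_self htr, one_mul]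
    rw [hB]
    rw [Finset.sum_congr rfl fun p _ => Stmt15.key_B2 hperm p, ← Finset.mul_sum]
    simp only [← Stmt15.repOf_eq_iff]
    have step1 : ∀ r : PRep n,
        (((2:ℂ)^n)⁻¹ * ∑ p ∈ Finset.univ.filter (fun p : Fin n → Fin 4 => pwt p = (i : ℕ)),
            ∑ τ : Fin n → Fin 4, (if Stmt15.repOf n τ = r then
              (if PauliOp n p * PauliOp n τ = PauliOp n τ * PauliOp n p then (1:ℂ) else -1)
              else 0)) * piVec n P r
        = ((2:ℂ)^n)⁻¹ * ∑ p ∈ Finset.univ.filter (fun p : Fin n → Fin 4 => pwt p = (i : ℕ)),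
            ∑ τ : Fin n → Fin 4, (if Stmt15.repOf n τ = r then
              (if PauliOp n p * PauliOp n τ = PauliOp n τ * PauliOp n p then (1:ℂ) else -1) *
                piVec n P r else 0) := by
      intro r
      rw [mul_assoc]
      congr 1
      rw [Finset.sum_mul]
      refine Finset.sum_congr rfl fun p _ => ?_
      rw [Finset.sum_mul]
      refine Finset.sum_congr rfl fun τ _ => ?_
      rw [ite_mul, zero_mul]
    rw [Finset.sum_congr rfl fun r _ => step1 r, ← Finset.mul_sum]
    congr 1
    rw [Finset.sum_comm]
    refine Finset.sum_congr rfl fun p _ => ?_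
    rw [Finset.sum_comm]
    refine Finset.sum_congr rfl fun τ _ => ?_
    rw [Finset.sum_ite_eq]
    simp
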